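/- (Gauge equivalence / decomposition theorem.) Set g := (1 + t − α·t)·β and ξ := t·x·α·t. Then g gauges the Maurer–Cartan element x to ξ: one has g·(D + x) = (D + ξ)·g in R; equivalently, g·x·g⁻¹ − (D·g − g·D)·g⁻¹ = t·x·α·t. -/

import Mathlib

/-!
The gauge transformation `g` factors as `β` followed by `e := 1 + t - α t`.
Pushing `D + x` through `1 + x s` and `1 + s x` (using the Maurer–Cartan equation and
`D s + s D = 1 - t`) shows that `β` gauges `x` to `x α t` and that `α` gauges `t x α` back to `x`;
together with `t α = t` and `D t = t D` the latter shows that `e` gauges `x α t` to `ξ`.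
Since `(t - α t)² = 0`, `e` is a unit, hence so is `g`, and the second identity is the first one
multiplied on the right by `g⁻¹`.
-/

section

variable {R : Type*} [Ring R]

theorem isUnit_one_add_mul_swap {a b : R} (h : IsUnit (1 + a * b)) : IsUnit (1 + b * a) := by
  refine ⟨⟨1 + b * a, 1 - b * Ring.inverse (1 + a * b) * a, ?_, ?_⟩, rfl⟩
  · linear_combination (norm := noncomm_ring) -b * Ring.mul_inverse_cancel _ h * a
  · linear_combination (norm := noncomm_ring) -b * Ring.inverse_mul_cancel _ h * a

/-- `g (D + x) g⁻¹ = D + y`, written without inverting `g`. -/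
def Gauges (D g x y : R) : Prop :=
  g * (D + x) = (D + y) * g

namespace Gauges

variable {D g h x y z : R}

theorem mul (hg : Gauges D g x y) (hh : Gauges D h y z) : Gauges D (h * g) x z := by
  unfold Gauges at *
  rw [mul_assoc, hg, ← mul_assoc, hh, mul_assoc]

theorem of_mul_eq_one (hg : Gauges D g y x) (hhg : h * g = 1) (hgh : g * h = 1) :
    Gauges D h x y := by
  unfold Gauges at *
  linear_combination (norm := noncomm_ring) -h * (D + x) * hgh - h * hg * h + hhg * (D + y) * h

theorem mul_sub_mul_eq (hg : Gauges D g x y) (hgh : g * h = 1) :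
    g * x * h - (D * g - g * D) * h = y := by
  unfold Gauges at hg
  linear_combination (norm := noncomm_ring) hg * h + y * hgh

end Gauges

section Perturbation

variable {D s t x α : R}

theorem gauges_one_add_mul (hx : D * x + x * D + x * x = 0) (hDs : D * s + s * D = 1 - t)
    (hα : α * (1 + s * x) = 1) : Gauges D (1 + s * x) x (t * x * α) := by
  unfold Gauges
  linear_combination (norm := noncomm_ring) s * hx - hDs * x - t * x * hα

theorem gauges_one_add_mul_swap (hx : D * x + x * D + x * x = 0) (hDs : D * s + s * D = 1 - t)
    (hα : (1 + s * x) * α = 1) : Gauges D (1 + x * s) (x * α * t) x := by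
  unfold Gauges
  linear_combination (norm := noncomm_ring) x * hα * t - hx * s + x * hDs

theorem gauges_one_add_sub_mul (hα : Gauges D α (t * x * α) x) (hDt : D * t = t * D)
    (htα : t * α = t) : Gauges D (1 + t - α * t) (x * α * t) (t * x * α * t) := by
  unfold Gauges at *
  linear_combination (norm := noncomm_ring) -hDt + α * hDt - hα * t + t * x * α * htα * t

theorem isUnit_one_add_sub_mul (htα : t * α = t) : IsUnit (1 + t - α * t) := by
  rw [add_sub_assoc]
  refine IsNilpotent.isUnit_one_add ⟨2, ?_⟩
  linear_combination (norm := noncomm_ring) (α - 1) * htα * t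

end Perturbation

end

theorem g_gauges_x_to_xi_general {R : Type*} [Ring R] (s t x D : R)
    (hts : t * s = 0)
    (hu : IsUnit (1 + s * x))
    (hDD : D * D = 0) (hDs : D * s + s * D = 1 - t) (hDt : D * t = t * D)
    (hMC : (D + x) * (D + x) = 0) :
    let α := Ring.inverse (1 + s * x)
    let β := Ring.inverse (1 + x * s)
    let g := (1 + t - α * t) * β
    let ξ := t * x * α * t
    g * (D + x) = (D + ξ) * g ∧
      g * x * Ring.inverse g - (D * g - g * D) * Ring.inverse g = t * x * α * t := by
  intro α β g ξ
  have hx : D * x + x * D + x * x = 0 := by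
    linear_combination (norm := noncomm_ring) hMC - hDD
  have hα₁ : α * (1 + s * x) = 1 := Ring.inverse_mul_cancel _ hu
  have hα₂ : (1 + s * x) * α = 1 := Ring.mul_inverse_cancel _ hu
  have hv : IsUnit (1 + x * s) := isUnit_one_add_mul_swap hu
  have htα : t * α = t := by
    linear_combination (norm := noncomm_ring) t * hα₂ - hts * x * α
  have hβ : Gauges D β x (x * α * t) :=
    (gauges_one_add_mul_swap hx hDs hα₂).of_mul_eq_one
      (Ring.inverse_mul_cancel _ hv) (Ring.mul_inverse_cancel _ hv)
  have hα : Gauges D α (t * x * α) x := (gauges_one_add_mul hx hDs hα₁).of_mul_eq_one hα₁ hα₂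
  have hg : Gauges D g x ξ := hβ.mul (gauges_one_add_sub_mul hα hDt htα)
  have hg_unit : IsUnit g := (isUnit_one_add_sub_mul htα).mul hv.ringInverse
  exact ⟨hg, hg.mul_sub_mul_eq (Ring.mul_inverse_cancel _ hg_unit)⟩

/-- Gauge equivalence / decomposition theorem: `g := (1 + t - αt)β` gauges the
Maurer–Cartan element `x` to `ξ := t x α t`: one has `g (D + x) = (D + ξ) g`;
equivalently `g x g⁻¹ - (Dg - gD) g⁻¹ = t x α t`. -/
theorem g_gauges_x_to_xi {R : Type*} [Ring R] (s t x D : R)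
    (hss : s * s = 0) (hst : s * t = 0) (hts : t * s = 0) (htt : t * t = t)
    (hu : IsUnit (1 + s * x))
    (hDD : D * D = 0) (hDs : D * s + s * D = 1 - t) (hDt : D * t = t * D)
    (hMC : (D + x) * (D + x) = 0) :
    let α := Ring.inverse (1 + s * x)
    let β := Ring.inverse (1 + x * s)
    let g := (1 + t - α * t) * β
    let ξ := t * x * α * t
    g * (D + x) = (D + ξ) * g ∧
      g * x * Ring.inverse g - (D * g - g * D) * Ring.inverse g = t * x * α * t :=
  g_gauges_x_to_xi_general s t x D hts hu hDD hDs hDt hMC
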